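/- arXiv:2302.03923 — 3 statements merged into one kernel-verified Lean document; each statement's English description precedes it below -/
import Mathlib

section
/- For every irrational real number ξ, v̂_{b,A}(ξ) ≤ η · v̂_b(ξ) ≤ η, where η = limsup_{n→∞} a_{n+1}/a_n < ∞. -/
open Filter MeasureTheory Set

/-- Distance to the nearest integer. -/
noncomputable def dni (x : ℝ) : ℝ := |x - round x|

/-- Asymptotic approximation exponent `v_{b,A}(ξ)` (valued in `EReal`). -/
noncomputable def vbA (b : ℕ) (a : ℕ → ℕ) (ξ : ℝ) : EReal :=
  sSup ((fun v : ℝ => (v : EReal)) ''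
    {v : ℝ | 0 ≤ v ∧ ∃ᶠ n in atTop, 1 ≤ n ∧
      dni ((b : ℝ) ^ (a n) * ξ) < (b : ℝ) ^ (-(a n : ℝ) * v)})

/-- Uniform approximation exponent `v̂_{b,A}(ξ)` (valued in `EReal`). -/
noncomputable def vhatbA (b : ℕ) (a : ℕ → ℕ) (ξ : ℝ) : EReal :=
  sSup ((fun v : ℝ => (v : EReal)) ''
    {v : ℝ | 0 ≤ v ∧ ∀ᶠ N in atTop, ∃ n, 1 ≤ n ∧ n ≤ N ∧
      dni ((b : ℝ) ^ (a n) * ξ) < (b : ℝ) ^ (-(a N : ℝ) * v)})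

lemma dni_nonneg (x : ℝ) : 0 ≤ dni x := abs_nonneg _

lemma dni_le_half (x : ℝ) : dni x ≤ 1 / 2 := abs_sub_round x

lemma dni_le_int (x : ℝ) (m : ℤ) : dni x ≤ |x - m| := round_le x m

/-- If `‖b^N ξ‖` decays geometrically for all large `N`, then `ξ` is rational. -/
lemma not_small_forall (b : ℕ) (hb : 2 ≤ b) (ξ : ℝ) (hξ : Irrational ξ) (δ : ℝ) (hδ : 0 < δ)
    (h : ∀ᶠ N : ℕ in atTop, dni ((b : ℝ) ^ N * ξ) < (b : ℝ) ^ (-(N : ℝ) * δ)) : False := by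
  have hb1 : (1 : ℝ) < (b : ℝ) := by exact_mod_cast hb.trans_lt' one_lt_two
  have hb0 : (0 : ℝ) < (b : ℝ) := lt_trans one_pos hb1
  set p : ℕ → ℤ := fun N => round ((b : ℝ) ^ N * ξ) with hp
  set θ : ℕ → ℝ := fun N => (b : ℝ) ^ N * ξ - p N with hθ
  have hθd : ∀ N, |θ N| = dni ((b : ℝ) ^ N * ξ) := fun N => rfl
  obtain ⟨N₀, hN₀⟩ := eventually_atTop.1 h
  -- decay of the polynomial bound
  have hr1 : (b : ℝ) ^ (-δ) < 1 := Real.rpow_lt_one_of_one_lt_of_neg hb1 (neg_neg_of_pos hδ)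
  have hr0 : 0 ≤ (b : ℝ) ^ (-δ) := Real.rpow_nonneg hb0.le _
  have hrw : ∀ N : ℕ, (b : ℝ) ^ (-(N : ℝ) * δ) = ((b : ℝ) ^ (-δ)) ^ N := by
    intro N
    rw [show -(N : ℝ) * δ = (-δ) * (N : ℝ) by ring, Real.rpow_mul hb0.le, Real.rpow_natCast]
  have htend : Filter.Tendsto (fun N : ℕ => ((b : ℝ) + 1) * (b : ℝ) ^ (-(N : ℝ) * δ))
      atTop (nhds 0) := by
    have := (tendsto_pow_atTop_nhds_zero_of_lt_one hr0 hr1).const_mul ((b : ℝ) + 1)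
    rw [mul_zero] at this
    refine this.congr fun N => ?_
    rw [hrw]
  obtain ⟨N₁', hN₁'⟩ := eventually_atTop.1 (htend.eventually_lt_const one_pos)
  set N₁ := max N₀ N₁' with hN₁def
  -- carry propagation
  have hcarry : ∀ N : ℕ, N₁ ≤ N → p (N + 1) = b * p N := by
    intro N hN
    have h1 : |θ N| < (b : ℝ) ^ (-(N : ℝ) * δ) := hN₀ N (le_trans (le_max_left _ _) hN)
    have h2 : |θ (N + 1)| < (b : ℝ) ^ (-((N + 1 : ℕ) : ℝ) * δ) :=
      hN₀ (N + 1) (le_trans (le_max_left _ _) (hN.trans (Nat.le_succ N)))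
    have h3 : (b : ℝ) ^ (-((N + 1 : ℕ) : ℝ) * δ) ≤ (b : ℝ) ^ (-(N : ℝ) * δ) := by
      apply Real.rpow_le_rpow_left_iff hb1 |>.2
      push_cast
      nlinarith
    have hz : ((b * p N - p (N + 1) : ℤ) : ℝ) = θ (N + 1) - (b : ℝ) * θ N := by
      simp only [hθ]
      push_cast
      rw [pow_succ]
      ring
    have habs : |((b * p N - p (N + 1) : ℤ) : ℝ)| < 1 := by
      rw [hz]
      calc |θ (N + 1) - (b : ℝ) * θ N| ≤ |θ (N + 1)| + (b : ℝ) * |θ N| := by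
            rw [sub_eq_add_neg]
            refine (abs_add_le _ _).trans ?_
            rw [abs_neg, abs_mul, abs_of_nonneg hb0.le]
        _ < (b : ℝ) ^ (-(N : ℝ) * δ) + (b : ℝ) * (b : ℝ) ^ (-(N : ℝ) * δ) := by
            have := mul_lt_mul_of_pos_left h1 hb0
            linarith [lt_of_lt_of_le h2 h3]
        _ = ((b : ℝ) + 1) * (b : ℝ) ^ (-(N : ℝ) * δ) := by ring
        _ < 1 := hN₁' N (le_trans (le_max_right _ _) hN)
    have hz0 : b * p N - p (N + 1) = 0 := by
      rw [← Int.cast_abs] at habs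
      have h5 : |(b : ℤ) * p N - p (N + 1)| < 1 := by exact_mod_cast habs
      rw [abs_lt] at h5
      omega
    omega
  -- iterate
  have hiter : ∀ k, p (N₁ + k) = b ^ k * p N₁ := by
    intro k
    induction k with
    | zero => simp
    | succ k ih =>
      rw [show N₁ + (k + 1) = (N₁ + k) + 1 by ring, hcarry _ (Nat.le_add_right _ _), ih,
        pow_succ]
      ring
  -- the distance is zero
  have hbound : ∀ k : ℕ, |(b : ℝ) ^ N₁ * ξ - p N₁| ≤ (1 / 2) / (b : ℝ) ^ k := by
    intro k
    have hkey : (b : ℝ) ^ k * ((b : ℝ) ^ N₁ * ξ - p N₁) = θ (N₁ + k) := by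
      show _ = (b : ℝ) ^ (N₁ + k) * ξ - ((p (N₁ + k) : ℤ) : ℝ)
      rw [hiter k]
      push_cast
      rw [pow_add]
      ring
    have : (b : ℝ) ^ k * |(b : ℝ) ^ N₁ * ξ - p N₁| ≤ 1 / 2 := by
      rw [← abs_of_nonneg (pow_nonneg hb0.le k), ← abs_mul, hkey]
      exact dni_le_half _
    rw [le_div_iff₀ (pow_pos hb0 k)]
    linarith [this]
  have hzero : (b : ℝ) ^ N₁ * ξ - p N₁ = 0 := by
    have hlim : Filter.Tendsto (fun k : ℕ => (1 / 2 : ℝ) / (b : ℝ) ^ k) atTop (nhds 0) := by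
      have := (tendsto_pow_atTop_nhds_zero_of_lt_one (le_of_lt (inv_pos.2 hb0))
        (inv_lt_one_of_one_lt₀ hb1)).const_mul (1 / 2 : ℝ)
      rw [mul_zero] at this
      refine this.congr fun k => ?_
      rw [inv_pow, ← div_eq_mul_inv]
    have := ge_of_tendsto hlim (Filter.Eventually.of_forall hbound)
    have habs := abs_nonneg ((b : ℝ) ^ N₁ * ξ - p N₁)
    have : |(b : ℝ) ^ N₁ * ξ - p N₁| = 0 := le_antisymm this habs
    exact abs_eq_zero.1 this
  -- ξ is rational, contradiction
  apply hξ
  refine ⟨(p N₁ : ℚ) / (b : ℚ) ^ N₁, ?_⟩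
  have hbne : ((b : ℝ)) ^ N₁ ≠ 0 := pow_ne_zero _ (ne_of_gt hb0)
  push_cast
  field_simp
  linarith [hzero]

/-- `0` belongs to the uniform approximation set. -/
lemma zero_mem_set (b : ℕ) (hb : 2 ≤ b) (a : ℕ → ℕ) (ξ : ℝ) :
    (0 : ℝ) ∈ {v : ℝ | 0 ≤ v ∧ ∀ᶠ N in atTop, ∃ n, 1 ≤ n ∧ n ≤ N ∧
      dni ((b : ℝ) ^ (a n) * ξ) < (b : ℝ) ^ (-(a N : ℝ) * v)} := by
  refine ⟨le_refl _, ?_⟩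
  filter_upwards [eventually_ge_atTop 1] with N hN
  refine ⟨1, le_refl _, hN, ?_⟩
  rw [mul_zero, Real.rpow_zero]
  exact lt_of_le_of_lt (dni_le_half _) (by norm_num)

lemma sSup_image_ge (S : Set ℝ) (c : ℝ) (hc : 0 < c) (h : ∀ w, 0 ≤ w → w < c → w ∈ S) :
    (c : EReal) ≤ sSup ((fun v : ℝ => (v : EReal)) '' S) := by
  rw [le_sSup_iff]
  intro u hu
  by_contra hlt
  push_neg at hlt
  have h0 : ((0 : ℝ) : EReal) ≤ u := hu ⟨0, h 0 le_rfl hc, rfl⟩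
  obtain ⟨w, hw1, hw2⟩ := EReal.exists_between_coe_real hlt
  have hw0 : (0 : ℝ) ≤ w := by
    have : ((0 : ℝ) : EReal) < (w : EReal) := lt_of_le_of_lt h0 hw1
    exact_mod_cast this.le
  have hwc : w < c := by exact_mod_cast hw2
  exact absurd (hu ⟨w, h w hw0 hwc, rfl⟩) (not_le.2 hw1)

theorem stmt2 (b : ℕ) (hb : 2 ≤ b) (a : ℕ → ℕ) (ha : StrictMono a)
    (hpos : ∀ n, 1 ≤ a n) (η : ℝ)
    (hbdd : BddAbove (Set.range fun n => (a (n + 1) : ℝ) / (a n : ℝ)))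
    (hη : Filter.limsup (fun n => (a (n + 1) : ℝ) / (a n : ℝ)) atTop = η)
    (ξ : ℝ) (hξ : Irrational ξ) :
    vhatbA b a ξ ≤ (η : EReal) * vhatbA b (fun n => n) ξ ∧
      (η : EReal) * vhatbA b (fun n => n) ξ ≤ (η : EReal) := by
  have hb1 : (1 : ℝ) < (b : ℝ) := by exact_mod_cast hb.trans_lt' one_lt_two
  have hb0 : (0 : ℝ) < (b : ℝ) := lt_trans one_pos hb1
  -- boundedness for limsup lemmas
  obtain ⟨C, hC⟩ := hbdd
  have hBdd : Filter.IsBoundedUnder (· ≤ ·) atTop (fun n => (a (n + 1) : ℝ) / (a n : ℝ)) :=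
    Filter.isBoundedUnder_of ⟨C, fun x => hC ⟨x, rfl⟩⟩
  -- η ≥ 1
  have hη1 : 1 ≤ η := by
    rw [← hη]
    apply Filter.le_limsup_of_frequently_le _ hBdd
    apply Filter.Frequently.of_forall
    intro n
    have h1 : (0 : ℝ) < (a n : ℝ) := by exact_mod_cast hpos n
    have h2 : (a n : ℝ) ≤ (a (n + 1) : ℝ) := by exact_mod_cast (ha (Nat.lt_succ_self n)).le
    rw [le_div_iff₀ h1]
    linarith
  have hηpos : (0 : ℝ) < η := lt_of_lt_of_le one_pos hη1
  -- `vhat_b ξ ≤ 1`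
  have hVle1 : vhatbA b (fun n => n) ξ ≤ ((1 : ℝ) : EReal) := by
    apply sSup_le
    rintro x ⟨v, ⟨hv0, hv⟩, rfl⟩
    rw [EReal.coe_le_coe_iff]
    by_contra hv1
    push_neg at hv1
    refine not_small_forall b hb ξ hξ (v - 1) (by linarith) ?_
    simp only at hv
    filter_upwards [hv, eventually_ge_atTop 1] with N hN hN1
    obtain ⟨n, hn1, hnN, hdni⟩ := hN
    -- dni (b^N ξ) ≤ b^(N-n) * dni (b^n ξ)
    have hkey : dni ((b : ℝ) ^ N * ξ) ≤ (b : ℝ) ^ (N - n) * dni ((b : ℝ) ^ n * ξ) := by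
      have heq : (b : ℝ) ^ N * ξ - (((b : ℤ) ^ (N - n) * round ((b : ℝ) ^ n * ξ) : ℤ) : ℝ)
          = (b : ℝ) ^ (N - n) * ((b : ℝ) ^ n * ξ - round ((b : ℝ) ^ n * ξ)) := by
        push_cast
        rw [mul_sub, ← mul_assoc, ← pow_add, Nat.sub_add_cancel hnN]
      calc dni ((b : ℝ) ^ N * ξ) ≤ |(b : ℝ) ^ N * ξ -
            (((b : ℤ) ^ (N - n) * round ((b : ℝ) ^ n * ξ) : ℤ) : ℝ)| := dni_le_int _ _
        _ = (b : ℝ) ^ (N - n) * dni ((b : ℝ) ^ n * ξ) := by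
            rw [heq, abs_mul, abs_of_nonneg (pow_nonneg hb0.le _)]; rfl
    have hpow : (b : ℝ) ^ (N - n) ≤ (b : ℝ) ^ N := pow_le_pow_right₀ hb1.le (Nat.sub_le N n)
    have hdpos : 0 < dni ((b : ℝ) ^ n * ξ) := by
      rcases lt_or_eq_of_le (dni_nonneg ((b : ℝ) ^ n * ξ)) with h | h
      · exact h
      · exfalso
        apply hξ
        have h0 : (b : ℝ) ^ n * ξ = round ((b : ℝ) ^ n * ξ) := by
          have := abs_eq_zero.1 h.symm
          linarith
        refine ⟨(round ((b : ℝ) ^ n * ξ) : ℚ) / (b : ℚ) ^ n, ?_⟩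
        have hbne : ((b : ℝ)) ^ n ≠ 0 := pow_ne_zero _ (ne_of_gt hb0)
        push_cast
        field_simp
        linarith [h0]
    calc dni ((b : ℝ) ^ N * ξ)
        ≤ (b : ℝ) ^ (N - n) * dni ((b : ℝ) ^ n * ξ) := hkey
      _ ≤ (b : ℝ) ^ N * dni ((b : ℝ) ^ n * ξ) :=
          mul_le_mul_of_nonneg_right hpow (dni_nonneg _)
      _ < (b : ℝ) ^ N * (b : ℝ) ^ (-(N : ℝ) * v) :=
          mul_lt_mul_of_pos_left hdni (pow_pos hb0 N)
      _ = (b : ℝ) ^ (-(N : ℝ) * (v - 1)) := by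
          rw [← Real.rpow_natCast (b : ℝ) N, ← Real.rpow_add hb0]
          ring_nf
  -- `0 ≤ vhat_b ξ`
  have hV0 : ((0 : ℝ) : EReal) ≤ vhatbA b (fun n => n) ξ :=
    le_sSup ⟨0, zero_mem_set b hb (fun n => n) ξ, rfl⟩
  constructor
  · -- main inequality
    apply sSup_le
    rintro x ⟨v, ⟨hv0, hv⟩, rfl⟩
    rcases eq_or_lt_of_le hv0 with hveq | hvpos
    · rw [← hveq]
      exact_mod_cast mul_nonneg (by exact_mod_cast hηpos.le : ((0:ℝ):EReal) ≤ (η : EReal)) hV0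
    -- v > 0 : show all w ∈ [0, v/η) are in the b-set
    have hincl : ∀ w, 0 ≤ w → w < v / η →
        w ∈ {w : ℝ | 0 ≤ w ∧ ∀ᶠ N in atTop, ∃ n, 1 ≤ n ∧ n ≤ N ∧
          dni ((b : ℝ) ^ ((fun n => n) n) * ξ) < (b : ℝ) ^ (-(((fun n => n) N : ℕ) : ℝ) * w)} := by
      intro w hw0 hwc
      rcases eq_or_lt_of_le hw0 with hweq | hwpos
      · rw [← hweq]; exact zero_mem_set b hb (fun n => n) ξ
      refine ⟨hw0, ?_⟩
      have hηw : η * w < v := by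
        rw [lt_div_iff₀ hηpos] at hwc
        linarith
      set ε := (v - η * w) / w with hε
      have hεpos : 0 < ε := div_pos (by linarith) hwpos
      have hεw : ε * w = v - η * w := div_mul_cancel₀ _ (ne_of_gt hwpos)
      have hεv : (η + ε) * w = v := by rw [add_mul, hεw]; ring
      -- the ratio is eventually < η + ε
      have hev2 : ∀ᶠ N in atTop, (a (N + 1) : ℝ) / (a N : ℝ) < η + ε := by
        apply Filter.eventually_lt_of_limsup_lt _ hBdd
        rw [hη]; linarith
      obtain ⟨N₂, hN₂⟩ := eventually_atTop.1 hev2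
      obtain ⟨N₁, hN₁⟩ := eventually_atTop.1 hv
      set K := max (max N₁ N₂) 1 with hK
      rw [eventually_atTop]
      refine ⟨a K, fun M hM => ?_⟩
      -- choose N := greatest index with a N ≤ M
      set N := Nat.findGreatest (fun k => a k ≤ M) M with hNdef
      have hKM : K ≤ M := le_trans ha.le_apply hM
      have hKN : K ≤ N := Nat.le_findGreatest hKM hM
      have haN : a N ≤ M := by
        have hN0 : 0 < N := lt_of_lt_of_le (lt_of_lt_of_le one_pos (le_max_right _ _)) hKN
        exact Nat.findGreatest_of_ne_zero (P := fun k => a k ≤ M) (n := M) hNdef.symm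
          (Nat.pos_iff_ne_zero.1 hN0)
      have haN1 : M < a (N + 1) := by
        by_cases hc : N + 1 ≤ M
        · have hgr := Nat.findGreatest_is_greatest (P := fun k => a k ≤ M) (n := M)
            (k := N + 1) (hNdef ▸ Nat.lt_succ_self N) hc
          omega
        · have h1 : M ≤ N := by omega
          have h2 : N + 1 ≤ a (N + 1) := ha.le_apply
          omega
      -- get the approximation at level N
      obtain ⟨n, hn1, hnN, hdni⟩ := hN₁ N (le_trans (le_trans (le_max_left _ _)
        (le_max_left _ _)) hKN)
      refine ⟨a n, hpos n, le_trans (ha.monotone hnN) haN, ?_⟩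
      simp only
      refine lt_of_lt_of_le hdni ?_
      apply (Real.rpow_le_rpow_left_iff hb1).2
      -- need M * w ≤ a N * v
      have haNpos : (0 : ℝ) < (a N : ℝ) := by exact_mod_cast hpos N
      have hratio : (a (N + 1) : ℝ) < (η + ε) * (a N : ℝ) := by
        have := hN₂ N (le_trans (le_trans (le_max_right _ _) (le_max_left _ _)) hKN)
        rwa [div_lt_iff₀ haNpos] at this
      have hMa : (M : ℝ) < (a (N + 1) : ℝ) := by exact_mod_cast haN1
      have : (M : ℝ) * w < (a N : ℝ) * v := by
        calc (M : ℝ) * w < (a (N + 1) : ℝ) * w := mul_lt_mul_of_pos_right hMa hwpos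
          _ < ((η + ε) * (a N : ℝ)) * w := mul_lt_mul_of_pos_right hratio hwpos
          _ = (a N : ℝ) * ((η + ε) * w) := by ring
          _ = (a N : ℝ) * v := by rw [hεv]
      nlinarith
    have hle : ((v / η : ℝ) : EReal) ≤ vhatbA b (fun n => n) ξ :=
      sSup_image_ge _ _ (div_pos hvpos hηpos) hincl
    calc ((v : ℝ) : EReal) = ((η * (v / η) : ℝ) : EReal) := by
          rw [mul_div_cancel₀ _ (ne_of_gt hηpos)]
      _ = (η : EReal) * ((v / η : ℝ) : EReal) := EReal.coe_mul _ _
      _ ≤ (η : EReal) * vhatbA b (fun n => n) ξ :=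
          mul_le_mul_of_nonneg_left hle (by exact_mod_cast hηpos.le)
  · calc (η : EReal) * vhatbA b (fun n => n) ξ ≤ (η : EReal) * ((1 : ℝ) : EReal) :=
        mul_le_mul_of_nonneg_left hVle1 (by exact_mod_cast hηpos.le)
    _ = (η : EReal) := by rw [← EReal.coe_mul, mul_one]
end

section
/- For each irrational real number ξ: if v̂_{b,A}(ξ) = η then v_{b,A}(ξ) = +∞, and if v̂_{b,A}(ξ) < η then v_{b,A}(ξ) ≥ v̂_{b,A}(ξ) / (η − v̂_{b,A}(ξ)). -/
/-!
Write `‖b ^ k ξ‖ = b ^ (-e k)`. If `‖b ^ k ξ‖ < ‖b ^ j ξ‖` for some `j < k`, then the nearest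
integer to `b ^ k ξ` is not `b ^ (k - j)` times the one to `b ^ j ξ`, whence
`1 ≤ 2 b ^ (k - j) ‖b ^ j ξ‖`, i.e. `e j ≤ k - j + 1`.

Let `n ≤ N` be such that `‖b ^ (a n) ξ‖` is minimal up to `N` and first beaten at `N + 1`.
For `w < v̂` the uniform property at `N` gives `e (a n) > w a N`, the gap bound gives
`e (a n) ≤ a (N + 1) - a n + 1`, and for `θ > η` eventually `a (N + 1) < θ a N`. Eliminating
`a N` and `a (N + 1)` leaves `e (a n) > (a n - 1) w / (θ - w)`, so `v ≥ w / (θ - w)`; let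
`θ → η` and `w → v̂`. When `v̂ = η` the bound `w / (η - w)` is unbounded.
-/

open Filter MeasureTheory Set

open Topology

lemma one_le_two_mul_mul_dni_of_dni_mul_lt {q : ℕ} (hq : 0 < q) {x : ℝ}
    (h : dni (q * x) < dni x) : 1 ≤ 2 * q * dni x := by
  have hq1 : (1 : ℝ) ≤ q := by exact_mod_cast hq
  have hx0 : 0 ≤ dni x := abs_nonneg _
  have hqabs : |(q : ℝ)| = q := abs_of_nonneg (Nat.cast_nonneg q)
  have hne : round ((q : ℝ) * x) ≠ q * round x := by
    intro heq
    have : dni (q * x) = q * dni x := by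
      rw [dni, dni, heq]
      push_cast
      rw [← mul_sub, abs_mul, hqabs]
    nlinarith
  have hone : (1 : ℝ) ≤ |((round ((q : ℝ) * x) - q * round x : ℤ) : ℝ)| := by
    exact_mod_cast Int.one_le_abs (sub_ne_zero.2 hne)
  have htri : |((round ((q : ℝ) * x) - q * round x : ℤ) : ℝ)| ≤ dni (q * x) + q * dni x := by
    have : ((round ((q : ℝ) * x) - q * round x : ℤ) : ℝ)
        = q * (x - round x) - (q * x - round ((q : ℝ) * x)) := by push_cast; ring
    rw [this, dni, dni]
    refine (abs_sub _ _).trans ?_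
    rw [abs_mul, hqabs, add_comm]
  nlinarith

noncomputable def nearIntExponent (b : ℕ) (ξ : ℝ) (k : ℕ) : ℝ :=
  -Real.logb b (dni ((b : ℝ) ^ k * ξ))

section nearIntExponent

variable {b : ℕ} {ξ : ℝ}

lemma dni_pow_mul_pos (hb : 0 < b) (hξ : Irrational ξ) (k : ℕ) :
    0 < dni ((b : ℝ) ^ k * ξ) := by
  have : Irrational ((b : ℝ) ^ k * ξ) := by
    exact_mod_cast hξ.natCast_mul (pow_ne_zero k hb.ne')
  exact abs_pos.2 (sub_ne_zero.2 (this.ne_int _))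

lemma lt_nearIntExponent_iff (hb : 1 < b) (hξ : Irrational ξ) (k : ℕ) (y : ℝ) :
    y < nearIntExponent b ξ k ↔ dni ((b : ℝ) ^ k * ξ) < (b : ℝ) ^ (-y) := by
  rw [nearIntExponent, lt_neg, ← Real.logb_lt_iff_lt_rpow (by exact_mod_cast hb)
    (dni_pow_mul_pos (by omega) hξ k)]

lemma nearIntExponent_pos (hb : 1 < b) (hξ : Irrational ξ) (k : ℕ) :
    0 < nearIntExponent b ξ k := by
  rw [lt_nearIntExponent_iff hb hξ, neg_zero, Real.rpow_zero]
  exact (abs_sub_round _).trans_lt (by norm_num)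

lemma nearIntExponent_le_of_lt (hb : 2 ≤ b) (hξ : Irrational ξ) {j k : ℕ} (hjk : j < k)
    (h : nearIntExponent b ξ j < nearIntExponent b ξ k) :
    nearIntExponent b ξ j ≤ k - j + 1 := by
  have hb0 : (0 : ℝ) < b := by positivity
  have hdist : dni ((b ^ (k - j) : ℕ) * ((b : ℝ) ^ j * ξ)) < dni ((b : ℝ) ^ j * ξ) := by
    rw [nearIntExponent, nearIntExponent, neg_lt_neg_iff, Real.logb_lt_logb_iff
      (by exact_mod_cast hb) (dni_pow_mul_pos (by omega) hξ k)
      (dni_pow_mul_pos (by omega) hξ j)] at h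
    rwa [Nat.cast_pow, ← mul_assoc, ← pow_add, Nat.sub_add_cancel hjk.le]
  have hgap := one_le_two_mul_mul_dni_of_dni_mul_lt (by positivity) hdist
  rw [← not_lt, lt_nearIntExponent_iff hb hξ, not_lt]
  calc (b : ℝ) ^ (-((k : ℝ) - j + 1)) = ((b : ℝ) ^ (k - j) * b)⁻¹ := by
        rw [Real.rpow_neg hb0.le, ← pow_succ, ← Real.rpow_natCast]
        push_cast [hjk.le]
        rfl
    _ ≤ (2 * (b : ℝ) ^ (k - j))⁻¹ := by
        refine inv_anti₀ (by positivity) ?_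
        rw [mul_comm]
        gcongr
        exact_mod_cast hb
    _ ≤ dni ((b : ℝ) ^ j * ξ) := by
        rw [inv_le_iff_one_le_mul₀ (by positivity)]
        push_cast at hgap
        linarith

end nearIntExponent

section Records

variable {e a : ℕ → ℝ}

lemma exists_argmax_before_exceed (he : ∀ C, ∃ n, C < e n) (M : ℕ) :
    ∃ n N, M ≤ n ∧ n ≤ N ∧ e n < e (N + 1) ∧ ∀ k ≤ N, e k ≤ e n := by
  classical
  obtain ⟨C, hC⟩ := ((Set.finite_Iio M).image e).bddAbove
  obtain ⟨N₀, hN₀⟩ := he C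
  obtain ⟨n, hn, hmax⟩ := (Finset.Iic N₀).exists_max_image e ⟨N₀, Finset.mem_Iic.2 le_rfl⟩
  have hmax' : ∀ k ≤ N₀, e k ≤ e n := fun k hk => hmax k (Finset.mem_Iic.2 hk)
  have hMn : M ≤ n := by
    by_contra! hnM
    linarith [hC ⟨n, hnM, rfl⟩, hmax' N₀ le_rfl]
  have hex : ∃ N, e n < e N := he (e n)
  have hfind : N₀ < Nat.find hex := by
    by_contra! h
    exact (hmax' _ h).not_gt (Nat.find_spec hex)
  obtain ⟨N, hN⟩ : ∃ N, Nat.find hex = N + 1 := Nat.exists_eq_add_one.2 (by omega)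
  refine ⟨n, N, hMn, ?_, hN ▸ Nat.find_spec hex, fun k hk => ?_⟩
  · have := Finset.mem_Iic.1 hn
    omega
  · exact not_lt.1 (Nat.find_min hex (by omega))

variable {w θ v : ℝ}

lemma frequently_mul_lt_of_eventually_exists_mul_lt (ha : Tendsto a atTop atTop)
    (hw : 0 < w) (hwθ : w < θ) (hv : v < w / (θ - w))
    (hgap : ∀ m n, m < n → e m < e n → e m ≤ a n - a m + 1)
    (hunif : ∀ᶠ N in atTop, ∃ n ≤ N, a N * w < e n)
    (hratio : ∀ᶠ N in atTop, a (N + 1) < θ * a N) :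
    ∃ᶠ n in atTop, a n * v < e n := by
  set W := w / (θ - w)
  have he : ∀ C, ∃ n, C < e n := fun C => by
    obtain ⟨N, ⟨n, -, hn⟩, hC⟩ :=
      (hunif.and ((ha.atTop_mul_const hw).eventually_gt_atTop C)).exists
    exact ⟨n, hC.trans hn⟩
  have hlarge : ∀ᶠ n in atTop, a n * v < (a n - 1) * W := by
    filter_upwards [(ha.atTop_mul_const (sub_pos.2 hv)).eventually_gt_atTop W] with n hn
    linarith
  obtain ⟨M, hM⟩ := eventually_atTop.1 (hunif.and (hratio.and hlarge))
  rw [frequently_atTop]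
  intro M₀
  obtain ⟨n, N, hn, hnN, hjump, hmax⟩ := exists_argmax_before_exceed he (max M M₀)
  obtain ⟨⟨m, hmN, hm⟩, hθN, -⟩ := hM N (by omega)
  obtain ⟨-, -, hvn⟩ := hM n (by omega)
  refine ⟨n, by omega, hvn.trans ?_⟩
  have hrec : e n ≤ a (N + 1) - a n + 1 := hgap n (N + 1) (by omega) hjump
  have hunifN : a N * w < e n := hm.trans_le (hmax m hmN)
  have hθ : 0 < θ := hw.trans hwθ
  have hnext : a (N + 1) * w < θ * e n := by nlinarith
  rw [← mul_div_assoc, div_lt_iff₀ (sub_pos.2 hwθ)]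
  nlinarith [mul_le_mul_of_nonneg_right hrec hw.le]

end Records

section RatioLimsup

variable {a : ℕ → ℕ}

lemma one_le_limsup_ratio (ha : StrictMono a)
    (hbdd : BddAbove (Set.range fun n => (a (n + 1) : ℝ) / (a n : ℝ))) :
    1 ≤ limsup (fun n => (a (n + 1) : ℝ) / (a n : ℝ)) atTop := by
  refine le_limsup_of_frequently_le (Eventually.frequently ?_) hbdd.isBoundedUnder_of_range
  filter_upwards [eventually_ge_atTop 1] with n hn
  have hpos : (0 : ℝ) < a n := by exact_mod_cast hn.trans (ha.id_le n)
  rw [le_div_iff₀ hpos, one_mul]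
  exact_mod_cast (ha n.lt_succ_self).le

lemma eventually_lt_mul_of_limsup_ratio_lt (ha : StrictMono a) {θ : ℝ}
    (hbdd : BddAbove (Set.range fun n => (a (n + 1) : ℝ) / (a n : ℝ)))
    (hθ : limsup (fun n => (a (n + 1) : ℝ) / (a n : ℝ)) atTop < θ) :
    ∀ᶠ n in atTop, (a (n + 1) : ℝ) < θ * a n := by
  filter_upwards [eventually_lt_of_limsup_lt hθ hbdd.isBoundedUnder_of_range,
    eventually_ge_atTop 1] with n hn hn1
  have hpos : (0 : ℝ) < a n := by exact_mod_cast hn1.trans (ha.id_le n)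
  rwa [div_lt_iff₀ hpos] at hn

end RatioLimsup

lemma coe_le_of_eventually_coe_le {f : ℝ → ℝ} {x₀ : ℝ} {s : Set ℝ} [(𝓝[s] x₀).NeBot]
    {c : EReal} (hf : ContinuousAt f x₀) (h : ∀ᶠ x in 𝓝[s] x₀, (f x : EReal) ≤ c) :
    (f x₀ : EReal) ≤ c :=
  le_of_tendsto ((continuous_coe_real_ereal.tendsto _).comp (hf.tendsto.mono_left
    nhdsWithin_le_nhds)) h

section DivSub

variable {η : ℝ} {x : EReal}

lemma eq_top_of_forall_div_sub_le (hη : 0 < η)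
    (h : ∀ w, 0 < w → w < η → ((w / (η - w) : ℝ) : EReal) ≤ x) : x = ⊤ := by
  rw [EReal.eq_top_iff_forall_lt]
  intro T
  set t := max T 0 + 1
  have ht : 0 < t := by positivity
  have hw : η * t / (t + 1) / (η - η * t / (t + 1)) = t := by
    field_simp
    ring
  have hwη : η * t / (t + 1) < η := by
    rw [div_lt_iff₀ (by linarith)]
    nlinarith
  calc (T : EReal) < t := EReal.coe_lt_coe_iff.2 (by simp [t]; linarith [le_max_left T 0])
    _ ≤ x := hw ▸ h _ (by positivity) hwη

lemma div_sub_le_of_forall_div_sub_le {u : ℝ} (hu : 0 < u) (huη : u < η)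
    (h : ∀ w, 0 < w → w < u → ((w / (η - w) : ℝ) : EReal) ≤ x) :
    ((u / (η - u) : ℝ) : EReal) ≤ x := by
  refine coe_le_of_eventually_coe_le (f := fun w => w / (η - w)) (s := Iio u)
    (continuousAt_id.div (continuousAt_const.sub continuousAt_id) (by linarith)) ?_
  filter_upwards [Ioo_mem_nhdsLT hu] with w hw
  exact h w hw.1 hw.2

end DivSub

section Exponents

variable {b : ℕ} {a : ℕ → ℕ} {ξ : ℝ}

lemma coe_le_vbA_of_frequently (hb : 1 < b) (hξ : Irrational ξ) {v : ℝ} (hv : 0 ≤ v)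
    (h : ∃ᶠ n in atTop, (a n : ℝ) * v < nearIntExponent b ξ (a n)) :
    (v : EReal) ≤ vbA b a ξ := by
  refine le_sSup ⟨v, ⟨hv, (h.and_eventually (eventually_ge_atTop 1)).mono ?_⟩, rfl⟩
  rintro n ⟨hn, hn1⟩
  rw [lt_nearIntExponent_iff hb hξ, ← neg_mul] at hn
  exact ⟨hn1, hn⟩

lemma vbA_nonneg (hb : 1 < b) (hξ : Irrational ξ) : 0 ≤ vbA b a ξ := by
  simpa using coe_le_vbA_of_frequently (a := a) hb hξ le_rfl
    (Frequently.of_forall fun n => by simpa using nearIntExponent_pos hb hξ (a n))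

lemma eventually_exists_mul_lt_of_lt_vhatbA (hb : 1 < b) (hξ : Irrational ξ) {w : ℝ}
    (hw : (w : EReal) < vhatbA b a ξ) :
    ∀ᶠ N in atTop, ∃ n ≤ N, (a N : ℝ) * w < nearIntExponent b ξ (a n) := by
  obtain ⟨-, ⟨v, ⟨-, hv⟩, rfl⟩, hwv⟩ := lt_sSup_iff.1 hw
  filter_upwards [hv] with N hN
  obtain ⟨n, -, hnN, hn⟩ := hN
  refine ⟨n, hnN, (lt_nearIntExponent_iff hb hξ _ _).2 (hn.trans_le ?_)⟩
  have hwv : w ≤ v := (EReal.coe_lt_coe_iff.1 hwv).le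
  gcongr
  · exact_mod_cast hb.le
  · rw [neg_mul]
    gcongr

lemma coe_div_sub_le_vbA (hb : 2 ≤ b) (ha : StrictMono a) {η : ℝ}
    (hbdd : BddAbove (Set.range fun n => (a (n + 1) : ℝ) / (a n : ℝ)))
    (hη : limsup (fun n => (a (n + 1) : ℝ) / (a n : ℝ)) atTop = η) (hξ : Irrational ξ)
    {w : ℝ} (hw : 0 < w) (hwη : w < η) (hwv : (w : EReal) < vhatbA b a ξ) :
    ((w / (η - w) : ℝ) : EReal) ≤ vbA b a ξ := by
  refine coe_le_of_eventually_coe_le (f := fun θ => w / (θ - w)) (s := Ioi η)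
    (continuousAt_const.div (continuousAt_id.sub continuousAt_const) (by linarith)) ?_
  filter_upwards [self_mem_nhdsWithin] with θ hθ
  rw [Set.mem_Ioi] at hθ
  refine coe_le_of_eventually_coe_le (f := id) (s := Iio (w / (θ - w))) continuousAt_id ?_
  filter_upwards [Ioo_mem_nhdsLT (div_pos hw (by linarith))] with v hv
  refine coe_le_vbA_of_frequently hb hξ hv.1.le ?_
  exact frequently_mul_lt_of_eventually_exists_mul_lt
    (tendsto_natCast_atTop_atTop.comp ha.tendsto_atTop) hw (by linarith) hv.2
    (fun m n hmn h => by exact_mod_cast nearIntExponent_le_of_lt hb hξ (ha hmn) h)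
    (eventually_exists_mul_lt_of_lt_vhatbA hb hξ hwv)
    (eventually_lt_mul_of_limsup_ratio_lt ha hbdd (hη ▸ hθ))

end Exponents

theorem stmt3_general (b : ℕ) (hb : 2 ≤ b) (a : ℕ → ℕ) (ha : StrictMono a)
    (η : ℝ)
    (hbdd : BddAbove (Set.range fun n => (a (n + 1) : ℝ) / (a n : ℝ)))
    (hη : Filter.limsup (fun n => (a (n + 1) : ℝ) / (a n : ℝ)) atTop = η)
    (ξ : ℝ) (hξ : Irrational ξ) :
    (vhatbA b a ξ = (η : EReal) → vbA b a ξ = ⊤) ∧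
    (vhatbA b a ξ < (η : EReal) →
      (((vhatbA b a ξ).toReal / (η - (vhatbA b a ξ).toReal) : ℝ) : EReal) ≤ vbA b a ξ) := by
  have hη1 : 1 ≤ η := hη ▸ one_le_limsup_ratio ha hbdd
  have key := @coe_div_sub_le_vbA b a ξ hb ha η hbdd hη hξ
  refine ⟨fun hvη => eq_top_of_forall_div_sub_le (by linarith) fun w hw hwη =>
    key hw hwη (hvη ▸ EReal.coe_lt_coe_iff.2 hwη), fun hlt => ?_⟩
  set u := (vhatbA b a ξ).toReal
  rcases le_or_gt u 0 with hu | hu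
  · exact (EReal.coe_le_coe_iff.2 (div_nonpos_of_nonpos_of_nonneg hu (by linarith))).trans
      (vbA_nonneg hb hξ)
  have hvu : vhatbA b a ξ = u :=
    (EReal.coe_toReal (hlt.trans (EReal.coe_lt_top η)).ne (fun h => by simp [u, h] at hu)).symm
  have huη : u < η := EReal.coe_lt_coe_iff.1 (hvu ▸ hlt)
  exact div_sub_le_of_forall_div_sub_le hu huη fun w hw hwu =>
    key hw (hwu.trans huη) (hvu ▸ EReal.coe_lt_coe_iff.2 hwu)

theorem stmt3 (b : ℕ) (hb : 2 ≤ b) (a : ℕ → ℕ) (ha : StrictMono a)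
    (hpos : ∀ n, 1 ≤ a n) (η : ℝ)
    (hbdd : BddAbove (Set.range fun n => (a (n + 1) : ℝ) / (a n : ℝ)))
    (hη : Filter.limsup (fun n => (a (n + 1) : ℝ) / (a n : ℝ)) atTop = η)
    (ξ : ℝ) (hξ : Irrational ξ) :
    (vhatbA b a ξ = (η : EReal) → vbA b a ξ = ⊤) ∧
    (vhatbA b a ξ < (η : EReal) →
      (((vhatbA b a ξ).toReal / (η - (vhatbA b a ξ).toReal) : ℝ) : EReal) ≤ vbA b a ξ) :=
  stmt3_general b hb a ha η hbdd hη ξ hξ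
end

section
/- Let θ and v̂ be positive real numbers with v̂ < η. If θ < max{1, 1/(η − v̂)}, then the set of irrational ξ with v̂_{b,A}(ξ) ≥ v̂ and v_{b,A}(ξ) = θ·v̂ is empty. -/
/-! Write `r n = ‖b ^ (a n) ξ‖`. If `‖q x‖ < ‖x‖` for an integer `q ≥ 1`, then `q ‖x‖ ≥ 1 / 2`,
since otherwise `q · round x` is the integer nearest to `q x`; with `q = b ^ (B - A)` this gives
`‖b ^ A ξ‖ ≥ b ^ (A - B - 1)` whenever `‖b ^ B ξ‖ < ‖b ^ A ξ‖`. Take `n ≤ m` such that the running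
minimum of `r` on `[1, m]` is attained at `n` and drops at `m + 1`. A uniform exponent `≥ w` gives
`r n < b ^ (-w a m)`, and separation then gives `a n - 1 < a (m + 1) - w a m < (η - w + o(1)) a m`.
Together with `a n ≤ a m`, this yields `r n < b ^ (-c a n)` for infinitely many `n` and every
`c < max w (w / (η - w))`. Hence `v_{b,A}(ξ) ≥ w · max 1 (1 / (η - w)) > θ w`. -/

open Filter MeasureTheory Set

open Topology

lemma dni_pos_of_irrational {x : ℝ} (hx : Irrational x) : 0 < dni x := by
  rw [dni, abs_pos, sub_ne_zero]
  exact hx.ne_int _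

lemma dni_natCast_mul_of_lt (x : ℝ) (q : ℕ) (h : q * dni x < 1 / 2) :
    dni (q * x) = q * dni x := by
  have hsplit : (q : ℝ) * x = ((q * round x : ℤ) : ℝ) + q * (x - round x) := by
    push_cast; ring
  have hsmall : |(q : ℝ) * (x - round x)| < 1 / 2 := by
    rwa [abs_mul, Nat.abs_cast]
  have hround : round ((q : ℝ) * (x - round x)) = 0 :=
    round_eq_zero_iff.2 ⟨by linarith [neg_abs_le ((q : ℝ) * (x - round x))],
      (le_abs_self _).trans_lt hsmall⟩
  rw [dni, hsplit, round_intCast_add, hround, add_zero, add_sub_cancel_left, abs_mul,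
    Nat.abs_cast, dni]

lemma inv_two_mul_le_dni_of_dni_natCast_mul_lt {x : ℝ} {q : ℕ} (h : dni (q * x) < dni x) :
    1 / (2 * q) ≤ dni x := by
  by_contra! hlt
  rcases Nat.eq_zero_or_pos q with rfl | hq
  · exact (abs_nonneg (x - round x)).not_gt (by simpa [dni] using hlt)
  · have hq' : (1 : ℝ) ≤ q := by exact_mod_cast hq
    have hdni : q * dni x < 1 / 2 := by
      rw [lt_div_iff₀ (by positivity)] at hlt; linarith
    rw [dni_natCast_mul_of_lt x q hdni] at h
    nlinarith [abs_nonneg (x - round x), show dni x = |x - round x| from rfl]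

lemma rpow_sub_sub_one_le_dni_of_dni_lt {b : ℕ} (hb : 2 ≤ b) (ξ : ℝ) {A B : ℕ} (hAB : A ≤ B)
    (h : dni ((b : ℝ) ^ B * ξ) < dni ((b : ℝ) ^ A * ξ)) :
    (b : ℝ) ^ ((A : ℝ) - B - 1) ≤ dni ((b : ℝ) ^ A * ξ) := by
  have hb2 : (2 : ℝ) ≤ b := by exact_mod_cast hb
  have hpow : (b : ℝ) ^ B * ξ = ((b ^ (B - A) : ℕ) : ℝ) * ((b : ℝ) ^ A * ξ) := by
    rw [Nat.cast_pow, ← mul_assoc, ← pow_add, Nat.sub_add_cancel hAB]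
  rw [hpow] at h
  refine le_trans ?_ (inv_two_mul_le_dni_of_dni_natCast_mul_lt h)
  have hexp : (A : ℝ) - B - 1 = -((B - A + 1 : ℕ) : ℝ) := by push_cast [hAB]; ring
  rw [hexp, Real.rpow_neg (by positivity), Real.rpow_natCast, pow_succ', Nat.cast_pow, one_div]
  gcongr

lemma exists_first_lt {r : ℕ → ℝ} {x : ℝ} (h : ∃ j, 1 ≤ j ∧ r j < x) :
    ∃ j, 1 ≤ j ∧ r j < x ∧ ∀ i, 1 ≤ i → i < j → x ≤ r i := by
  classical
  exact ⟨Nat.find h, (Nat.find_spec h).1, (Nat.find_spec h).2,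
    fun i hi hij => not_lt.1 fun hlt => Nat.find_min h hij ⟨hi, hlt⟩⟩

lemma exists_runningMin_drop {r : ℕ → ℝ} (hr : ∀ n, 0 < r n)
    (hinf : ∀ ε > 0, ∃ n, 1 ≤ n ∧ r n < ε) (M : ℕ) :
    ∃ n m, M ≤ n ∧ 1 ≤ n ∧ n ≤ m ∧ (∀ j, 1 ≤ j → j ≤ m → r n ≤ r j) ∧ r (m + 1) < r n := by
  obtain ⟨i₀, -, hi₀⟩ := (Finset.range (M + 1)).exists_min_image r ⟨0, by simp⟩
  obtain ⟨n, hn1, hni₀, hnfirst⟩ := exists_first_lt (hinf (r i₀) (hr i₀))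
  have hMn : M < n := by
    by_contra! hnM
    exact (hi₀ n (Finset.mem_range.2 (by omega))).not_gt hni₀
  obtain ⟨k, hk1, hkn, hkfirst⟩ := exists_first_lt (hinf (r n) (hr n))
  have hnk : n < k := by
    by_contra! hkn'
    rcases hkn'.lt_or_eq with hlt | rfl
    · linarith [hnfirst k hk1 hlt]
    · exact lt_irrefl _ hkn
  refine ⟨n, k - 1, hMn.le, hn1, by omega, fun j hj1 hjm => hkfirst j hj1 (by omega), ?_⟩
  rwa [Nat.sub_add_cancel hk1]

section Approximation

variable {b : ℕ} {a : ℕ → ℕ} {ξ : ℝ}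

lemma le_vbA_of_frequently {c : ℝ} (hc : 0 ≤ c)
    (h : ∃ᶠ n in atTop, 1 ≤ n ∧ dni ((b : ℝ) ^ (a n) * ξ) < (b : ℝ) ^ (-(a n : ℝ) * c)) :
    (c : EReal) ≤ vbA b a ξ :=
  le_sSup ⟨c, ⟨hc, h⟩, rfl⟩

lemma eventually_dni_lt_of_lt_vhatbA (hb : 1 ≤ b) {v : ℝ} (hv : (v : EReal) < vhatbA b a ξ) :
    ∀ᶠ N in atTop, ∃ n, 1 ≤ n ∧ n ≤ N ∧
      dni ((b : ℝ) ^ (a n) * ξ) < (b : ℝ) ^ (-(a N : ℝ) * v) := by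
  rw [vhatbA, lt_sSup_iff] at hv
  obtain ⟨_, ⟨u, ⟨-, hu⟩, rfl⟩, hvu⟩ := hv
  have hvu : v < u := EReal.coe_lt_coe_iff.1 hvu
  filter_upwards [hu] with N ⟨n, hn1, hnN, hn⟩
  refine ⟨n, hn1, hnN, hn.trans_le (Real.rpow_le_rpow_of_exponent_le (by exact_mod_cast hb) ?_)⟩
  exact mul_le_mul_of_nonpos_left hvu.le (neg_nonpos.2 (Nat.cast_nonneg _))

lemma exists_sub_one_lt_of_eventually_dni_lt (hb : 2 ≤ b) (ha : StrictMono a)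
    (hξ : Irrational ξ) {v : ℝ} (hv : 0 < v)
    (hU : ∀ᶠ N in atTop, ∃ n, 1 ≤ n ∧ n ≤ N ∧
      dni ((b : ℝ) ^ (a n) * ξ) < (b : ℝ) ^ (-(a N : ℝ) * v)) (M : ℕ) :
    ∃ n m, M ≤ n ∧ 1 ≤ n ∧ n ≤ m ∧ (a n : ℝ) - 1 < a (m + 1) - a m * v ∧
      dni ((b : ℝ) ^ (a n) * ξ) < (b : ℝ) ^ (-(a m : ℝ) * v) := by
  have hb1 : (1 : ℝ) < b := by exact_mod_cast hb
  have hr : ∀ n, 0 < dni ((b : ℝ) ^ (a n) * ξ) := fun n => by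
    refine dni_pos_of_irrational ?_
    exact_mod_cast hξ.natCast_mul (pow_ne_zero (a n) (by omega : b ≠ 0))
  have hsmall : Tendsto (fun N => (b : ℝ) ^ (-(a N : ℝ) * v)) atTop (𝓝 0) :=
    (tendsto_rpow_atBot_of_base_gt_one _ hb1).comp <| Tendsto.atBot_mul_const hv <|
      tendsto_neg_atTop_atBot.comp <| tendsto_natCast_atTop_atTop.comp ha.tendsto_atTop
  have hinf : ∀ ε > 0, ∃ n, 1 ≤ n ∧ dni ((b : ℝ) ^ (a n) * ξ) < ε := fun ε hε => by
    obtain ⟨N, ⟨n, hn1, -, hn⟩, hN⟩ := (hU.and (hsmall.eventually (gt_mem_nhds hε))).exists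
    exact ⟨n, hn1, hn.trans hN⟩
  obtain ⟨N₀, hN₀⟩ := eventually_atTop.1 hU
  obtain ⟨n, m, hMn, hn1, hnm, hmin, hdrop⟩ := exists_runningMin_drop hr hinf (max M N₀)
  have hrn : dni ((b : ℝ) ^ (a n) * ξ) < (b : ℝ) ^ (-(a m : ℝ) * v) := by
    obtain ⟨j, hj1, hjm, hj⟩ := hN₀ m (by omega)
    exact (hmin j hj1 hjm).trans_lt hj
  have hsep := rpow_sub_sub_one_le_dni_of_dni_lt hb ξ (ha.monotone (hnm.trans m.le_succ)) hdrop
  have hexp := (Real.rpow_lt_rpow_left_iff hb1).1 (hsep.trans_lt hrn)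
  exact ⟨n, m, le_of_max_le_left hMn, hn1, hnm, by linarith, hrn⟩

lemma eventually_mul_le_of_sub_one_lt {v t c : ℝ} (hv : 0 ≤ v) (hvt : v < t)
    (hc : c < max v (v / (t - v))) :
    ∀ᶠ x in atTop, ∀ y, x ≤ y → x - 1 < y * (t - v) → c * x ≤ v * y := by
  rcases lt_max_iff.1 hc with hcv | hcκ
  · filter_upwards [eventually_ge_atTop 0] with x hx y hxy _
    nlinarith
  · set κ := v / (t - v) with hκ
    have htv : 0 < t - v := sub_pos.2 hvt
    have hκ0 : 0 ≤ κ := div_nonneg hv htv.le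
    have hvκ : v = κ * (t - v) := by rw [hκ, div_mul_cancel₀ _ htv.ne']
    filter_upwards [eventually_ge_atTop (κ / (κ - c))] with x hx y _ hxy
    have hκx : κ ≤ (κ - c) * x := by rwa [div_le_iff₀' (sub_pos.2 hcκ)] at hx
    calc c * x ≤ κ * (x - 1) := by linarith
      _ ≤ κ * (y * (t - v)) := mul_le_mul_of_nonneg_left hxy.le hκ0
      _ = κ * (t - v) * y := by ring
      _ = v * y := by rw [← hvκ]

lemma frequently_dni_lt_of_eventually_dni_lt (hb : 2 ≤ b) (ha : StrictMono a)
    (hξ : Irrational ξ) {v : ℝ} (hv : 0 < v)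
    (hU : ∀ᶠ N in atTop, ∃ n, 1 ≤ n ∧ n ≤ N ∧
      dni ((b : ℝ) ^ (a n) * ξ) < (b : ℝ) ^ (-(a N : ℝ) * v))
    {t : ℝ} (hvt : v < t) (ht : ∀ᶠ m in atTop, (a (m + 1) : ℝ) < t * a m)
    {c : ℝ} (hc : c < max v (v / (t - v))) :
    ∃ᶠ n in atTop, 1 ≤ n ∧ dni ((b : ℝ) ^ (a n) * ξ) < (b : ℝ) ^ (-(a n : ℝ) * c) := by
  obtain ⟨M₁, hM₁⟩ := eventually_atTop.1 ht
  obtain ⟨M₂, hM₂⟩ := eventually_atTop.1 <|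
    (tendsto_natCast_atTop_atTop.comp ha.tendsto_atTop).eventually
      (eventually_mul_le_of_sub_one_lt hv.le hvt hc)
  simp only [Function.comp_apply] at hM₂
  refine frequently_atTop.2 fun M => ?_
  obtain ⟨n, m, hMn, hn1, hnm, hsub, hrn⟩ :=
    exists_sub_one_lt_of_eventually_dni_lt hb ha hξ hv hU (max M (max M₁ M₂))
  have hcv : c * a n ≤ v * a m := by
    refine hM₂ n (by omega) (a m) (by exact_mod_cast ha.monotone hnm) ?_
    linarith [hM₁ m (by omega)]
  refine ⟨n, by omega, hn1, hrn.trans_le (Real.rpow_le_rpow_of_exponent_le ?_ (by linarith))⟩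
  exact_mod_cast (by omega : 1 ≤ b)

end Approximation

lemma eventually_lt_mul_of_limsup_lt {a : ℕ → ℕ} (ha : StrictMono a)
    (hbdd : BddAbove (Set.range fun n => (a (n + 1) : ℝ) / (a n : ℝ))) {t : ℝ}
    (ht : limsup (fun n => (a (n + 1) : ℝ) / (a n : ℝ)) atTop < t) :
    ∀ᶠ m in atTop, (a (m + 1) : ℝ) < t * a m := by
  filter_upwards [eventually_lt_of_limsup_lt ht hbdd.isBoundedUnder_of_range,
    eventually_ge_atTop 1] with m hm hm1
  have ham : (0 : ℝ) < a m := Nat.cast_pos.2 (by have : m ≤ a m := ha.id_le m; omega)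
  rwa [div_lt_iff₀ ham] at hm

theorem max_le_vbA_of_le_vhatbA {b : ℕ} (hb : 2 ≤ b) {a : ℕ → ℕ} (ha : StrictMono a)
    (hbdd : BddAbove (Set.range fun n => (a (n + 1) : ℝ) / (a n : ℝ))) {η : ℝ}
    (hη : limsup (fun n => (a (n + 1) : ℝ) / (a n : ℝ)) atTop = η)
    {ξ : ℝ} (hξ : Irrational ξ) {w : ℝ} (hw : 0 < w) (hwη : w < η)
    (hvhat : (w : EReal) ≤ vhatbA b a ξ) :
    ((max w (w / (η - w)) : ℝ) : EReal) ≤ vbA b a ξ := by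
  have hle : ∀ c, 0 ≤ c → c < max w (w / (η - w)) → (c : EReal) ≤ vbA b a ξ := by
    intro c hc0 hc
    have hcont : ContinuousAt
        (fun δ : ℝ => max (w - δ) ((w - δ) / ((η + δ) - (w - δ)))) 0 := by
      refine (continuousAt_const.sub continuousAt_id).max
        ((continuousAt_const.sub continuousAt_id).div ?_ ?_)
      · exact (continuousAt_const.add continuousAt_id).sub (continuousAt_const.sub continuousAt_id)
      · simp only [add_zero, sub_zero]; linarith
    have hnear : ∀ᶠ δ in 𝓝 (0 : ℝ),
        c < max (w - δ) ((w - δ) / ((η + δ) - (w - δ))) ∧ 0 < w - δ :=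
      (hcont.eventually (lt_mem_nhds (by simpa using hc))).and
        ((continuousAt_const.sub continuousAt_id).eventually (lt_mem_nhds (by simpa using hw)))
    obtain ⟨δ, ⟨hcδ, hwδ⟩, hδ : 0 < δ⟩ :=
      ((hnear.filter_mono nhdsWithin_le_nhds).and self_mem_nhdsWithin).exists (f := 𝓝[>] 0)
    have hU := eventually_dni_lt_of_lt_vhatbA (by omega : 1 ≤ b)
      (lt_of_lt_of_le (by exact_mod_cast (by linarith : w - δ < w)) hvhat)
    have ht := eventually_lt_mul_of_limsup_lt ha hbdd (t := η + δ) (by linarith)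
    exact le_vbA_of_frequently hc0
      (frequently_dni_lt_of_eventually_dni_lt hb ha hξ hwδ hU (by linarith) ht hcδ)
  by_contra! hlt
  obtain ⟨c, hvc, hc⟩ := EReal.lt_iff_exists_real_btwn.1 hlt
  have hc' : max c 0 < max w (w / (η - w)) :=
    max_lt (EReal.coe_lt_coe_iff.1 hc) (lt_max_of_lt_left hw)
  have := (hle (max c 0) (le_max_right c 0) hc').trans_lt hvc
  exact (EReal.coe_lt_coe_iff.1 this).not_ge (le_max_left c 0)

theorem stmt4_general (b : ℕ) (hb : 2 ≤ b) (a : ℕ → ℕ) (ha : StrictMono a)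
    (η : ℝ)
    (hbdd : BddAbove (Set.range fun n => (a (n + 1) : ℝ) / (a n : ℝ)))
    (hη : Filter.limsup (fun n => (a (n + 1) : ℝ) / (a n : ℝ)) atTop = η)
    (θ w : ℝ) (hw : 0 < w) (hwη : w < η)
    (hθlt : θ < max 1 (1 / (η - w))) :
    {ξ : ℝ | Irrational ξ ∧ (w : EReal) ≤ vhatbA b a ξ ∧
      vbA b a ξ = ((θ * w : ℝ) : EReal)} = ∅ := by
  refine eq_empty_of_forall_notMem fun ξ ⟨hξ, hvhat, hv⟩ => ?_
  have hmax := max_le_vbA_of_le_vhatbA hb ha hbdd hη hξ hw hwη hvhat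
  rw [hv, EReal.coe_le_coe_iff] at hmax
  have hmax' : max 1 (1 / (η - w)) * w ≤ θ * w := by
    rwa [max_mul_of_nonneg _ _ hw.le, one_mul, one_div_mul_eq_div]
  exact hθlt.not_ge (le_of_mul_le_mul_right hmax' hw)

theorem stmt4 (b : ℕ) (hb : 2 ≤ b) (a : ℕ → ℕ) (ha : StrictMono a)
    (hpos : ∀ n, 1 ≤ a n) (η : ℝ)
    (hbdd : BddAbove (Set.range fun n => (a (n + 1) : ℝ) / (a n : ℝ)))
    (hη : Filter.limsup (fun n => (a (n + 1) : ℝ) / (a n : ℝ)) atTop = η)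
    (θ w : ℝ) (hθ : 0 < θ) (hw : 0 < w) (hwη : w < η)
    (hθlt : θ < max 1 (1 / (η - w))) :
    {ξ : ℝ | Irrational ξ ∧ (w : EReal) ≤ vhatbA b a ξ ∧
      vbA b a ξ = ((θ * w : ℝ) : EReal)} = ∅ :=
  stmt4_general b hb a ha η hbdd hη θ w hw hwη hθlt
end
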